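/- For every s ∈ (0,1), the function α(s) = ω_q(s)^q/s − 1 is differentiable at s with derivative α′(s) = (1/s)·(−ω_q(s)/((q−1)·(ω_q(s)−1)) − ω_q(s)^q/s). -/

import Mathlib

noncomputable section

open Real Set

/-- `H r z = r·z^(r-1) - (r-1)·z^r`. -/
def H (r z : ℝ) : ℝ := r * z ^ (r - 1) - (r - 1) * z ^ r

/-- `ω` is the inverse of `H r`, mapping `(0,1]` into `[1, r/(r-1))`,
    so that `H r (ω s) = s` for `s ∈ (0,1]`. -/
def IsOmega (r : ℝ) (ω : ℝ → ℝ) : Prop :=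
  ∀ s ∈ Set.Ioc (0 : ℝ) 1, ω s ∈ Set.Ico (1 : ℝ) (r / (r - 1)) ∧ H r (ω s) = s

/-- `τ(s₁,s₂,t) = ((p-q)/p)·(t^p - s₁)/(t^(p-q) - s₁/s₂)`. -/
def tau (p q s₁ s₂ t : ℝ) : ℝ :=
  ((p - q) / p) * ((t ^ p - s₁) / (t ^ (p - q) - s₁ / s₂))

/-- `F(τ)` from the paper, where `ω` plays the role of `ω_q`. -/
def Ffun (p q : ℝ) (ω : ℝ → ℝ) (τ : ℝ) : ℝ :=
  (τ / (1 - ω τ)) * (p - (q * (p - 1) / (q - 1)) * ω τ)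
    - q * (p * ω τ ^ (q - 1) - (p - 1) * ω τ ^ q)

/-- `A(s)` from the paper, where `ω` plays the role of `ω_q`. -/
def Afun (q : ℝ) (ω : ℝ → ℝ) (s : ℝ) : ℝ :=
  s * (ω s / ((q - 1) * (ω s - 1)) + ω s ^ q / s)

open Filter Topology

/-!
Since `H_q'(z) = q(q-1) z^(q-2) (1-z)` is negative on `(1, ∞)`, `H_q` is strictly decreasing
there, so `ω_q` is a local inverse of `H_q` near `ω_q(s)` and the inverse function theorem gives
`ω_q'(s) = 1 / H_q'(ω_q(s))`. The chain rule then yields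
`(ω_q^q)'(s) = -ω_q(s) / ((q-1)(ω_q(s)-1))`, and the quotient rule finishes.
-/

lemma rpow_sub_one_eq_rpow_sub_two_mul {z : ℝ} (hz : z ≠ 0) (r : ℝ) :
    z ^ (r - 1) = z ^ (r - 2) * z := by
  rw [← rpow_add_one hz]
  ring_nf

lemma hasStrictDerivAt_H (r : ℝ) {z : ℝ} (hz : z ≠ 0) :
    HasStrictDerivAt (H r) (r * (r - 1) * z ^ (r - 2) * (1 - z)) z := by
  have h := ((hasStrictDerivAt_rpow_const_of_ne hz (r - 1)).const_mul r).sub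
    ((hasStrictDerivAt_rpow_const_of_ne hz r).const_mul (r - 1))
  refine h.congr_deriv ?_
  rw [show r - 1 - 1 = r - 2 by ring, rpow_sub_one_eq_rpow_sub_two_mul hz]
  ring

lemma H_one (r : ℝ) : H r 1 = 1 := by
  simp [H]

lemma H_deriv_neg {r z : ℝ} (hr : 1 < r) (hz : 1 < z) :
    r * (r - 1) * z ^ (r - 2) * (1 - z) < 0 :=
  mul_neg_of_pos_of_neg
    (mul_pos (mul_pos (by linarith) (by linarith)) (rpow_pos_of_pos (by linarith) _))
    (by linarith)

lemma strictAntiOn_H {r : ℝ} (hr : 1 < r) : StrictAntiOn (H r) (Ici 1) := by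
  refine strictAntiOn_of_hasDerivWithinAt_neg (convex_Ici 1)
    (f' := fun x => r * (r - 1) * x ^ (r - 2) * (1 - x)) ?_ ?_ ?_
  · exact fun x hx => (hasStrictDerivAt_H r (by linarith [mem_Ici.mp hx] : x ≠ 0)).hasDerivAt
      |>.continuousAt.continuousWithinAt
  · intro x hx
    rw [interior_Ici] at hx
    exact (hasStrictDerivAt_H r (by linarith [mem_Ioi.mp hx] : x ≠ 0)).hasDerivAt.hasDerivWithinAt
  · intro x hx
    rw [interior_Ici] at hx
    exact H_deriv_neg hr hx

namespace IsOmega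

variable {r : ℝ} {ω : ℝ → ℝ} {s : ℝ}

lemma one_lt (hω : IsOmega r ω) (hs : s ∈ Ioo 0 1) : 1 < ω s := by
  obtain ⟨⟨hω1, -⟩, hH⟩ := hω s ⟨hs.1, hs.2.le⟩
  refine hω1.lt_of_ne fun h => hs.2.ne ?_
  rw [← hH, ← h, H_one]

lemma eventually_apply_H (hr : 1 < r) (hω : IsOmega r ω) (hs : s ∈ Ioo 0 1) :
    ∀ᶠ x in 𝓝 (ω s), ω (H r x) = x := by
  have hcont : ContinuousAt (H r) (ω s) :=
    (hasStrictDerivAt_H r (z := ω s) (by linarith [hω.one_lt hs])).hasDerivAt.continuousAt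
  have hH_mem : ∀ᶠ x in 𝓝 (ω s), H r x ∈ Ioo 0 1 :=
    hcont.preimage_mem_nhds (by rw [(hω s ⟨hs.1, hs.2.le⟩).2]; exact isOpen_Ioo.mem_nhds hs)
  filter_upwards [hH_mem, eventually_gt_nhds (hω.one_lt hs)] with x hx hx1
  obtain ⟨⟨hωx, -⟩, hHx⟩ := hω (H r x) ⟨hx.1, hx.2.le⟩
  exact strictAntiOn_H hr |>.injOn hωx (mem_Ici.mpr hx1.le) hHx

lemma hasStrictDerivAt (hr : 1 < r) (hω : IsOmega r ω) (hs : s ∈ Ioo 0 1) :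
    HasStrictDerivAt ω (r * (r - 1) * ω s ^ (r - 2) * (1 - ω s))⁻¹ s := by
  have hω1 := hω.one_lt hs
  have h := (hasStrictDerivAt_H r (by linarith : ω s ≠ 0)).to_local_left_inverse
    (H_deriv_neg hr hω1).ne (hω.eventually_apply_H hr hs)
  rwa [(hω s ⟨hs.1, hs.2.le⟩).2] at h

lemma hasDerivAt_rpow (hr : 1 < r) (hω : IsOmega r ω) (hs : s ∈ Ioo 0 1) :
    HasDerivAt (fun u => ω u ^ r) (-(ω s / ((r - 1) * (ω s - 1)))) s := by
  have hω1 := hω.one_lt hs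
  have hω0 : ω s ≠ 0 := by linarith
  refine ((hω.hasStrictDerivAt hr hs).hasDerivAt.rpow_const (Or.inl hω0)).congr_deriv ?_
  have hpos : 0 < ω s ^ (r - 2) := rpow_pos_of_pos (by linarith) _
  rw [rpow_sub_one_eq_rpow_sub_two_mul hω0]
  field_simp [hpos.ne', (by linarith : r - 1 ≠ 0), (by linarith : ω s - 1 ≠ 0),
    (by linarith : 1 - ω s ≠ 0)]
  ring

end IsOmega

theorem stmt_16_general (q : ℝ) (hq : 1 < q)
    (ωq : ℝ → ℝ) (hωq : IsOmega q ωq) :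
    ∀ s ∈ Set.Ioo (0 : ℝ) 1,
      HasDerivAt (fun u => ωq u ^ q / u - 1)
        ((1 / s) * (-(ωq s / ((q - 1) * (ωq s - 1))) - ωq s ^ q / s)) s := by
  intro s hs
  have hquot := (hωq.hasDerivAt_rpow hq hs).div (hasDerivAt_id' s) hs.1.ne'
  refine (hquot.sub_const 1).congr_deriv ?_
  field_simp [hs.1.ne']

/-- `α(s) = ω_q(s)^q/s − 1` is differentiable on `(0,1)` with
`α′(s) = (1/s)·(−ω_q(s)/((q−1)(ω_q(s)−1)) − ω_q(s)^q/s)`. -/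
theorem stmt_16 (p q : ℝ) (hq : 1 < q) (hqp : q < p)
    (ωq : ℝ → ℝ) (hωq : IsOmega q ωq) :
    ∀ s ∈ Set.Ioo (0 : ℝ) 1,
      HasDerivAt (fun u => ωq u ^ q / u - 1)
        ((1 / s) * (-(ωq s / ((q - 1) * (ωq s - 1))) - ωq s ^ q / s)) s :=
  stmt_16_general q hq ωq hωq
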